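/- There exists a forgetful distributed automaton A' over unlabeled 2-relational digraphs, with state set {w, f, y}, initial state w, accepting set {y}, and transition δ(N1, N2) = w if N1 = N2 = {w}; δ(N1, N2) = f if N1, N2 ∈ {∅, {f}}; and δ(N1, N2) = y otherwise, such that when A' is run on an unlabeled 2-relational ordered ditree, A' accepts at the root if and only if the tree is not perfectly balanced (i.e., some node's left and right subtrees have different heights, where a missing subtree has height distinct from any present subtree). -/
import Mathlib


/-- Finite ordered binary ditrees (each node has zero children, only a left
child, or a left and a right child), unlabeled. -/
inductive BTree : Type
  | leaf : BTree
  | one : BTree → BTree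
  | two : BTree → BTree → BTree

def BTree.height : BTree → ℕ
  | .leaf => 0
  | .one l => l.height + 1
  | .two l r => max l.height r.height + 1

/-- A binary tree is perfectly balanced if every node has zero or two children
and every node's two subtrees have equal height. -/
def BTree.balanced : BTree → Prop
  | .leaf => True
  | .one _ => False
  | .two l r => l.balanced ∧ r.balanced ∧ l.height = r.height

/-- The three states of the automaton A': waiting `w`, finished `f`,
accepting `y`. -/
inductive Q3 : Type
  | w : Q3
  | f : Q3
  | y : Q3
deriving DecidableEq

open scoped Classical

/-- The (forgetful) transition of A': `δ(N1,N2) = w` if `N1 = N2 = {w}`;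
`f` if `N1, N2 ∈ {∅, {f}}`; `y` otherwise. -/
noncomputable def δA' (N1 N2 : Set Q3) : Q3 :=
  if N1 = {Q3.w} ∧ N2 = {Q3.w} then Q3.w
  else if (N1 = ∅ ∨ N1 = {Q3.f}) ∧ (N2 = ∅ ∨ N2 = {Q3.f}) then Q3.f
  else Q3.y

/-- The run of A' on an (unlabeled, 2-relational ordered) ditree: the state of
the root of subtree `T` at time `t`.  Every node starts in the initial state
`w`, and updates using `δA'` applied to the set of states of its incoming
1-neighbors (left child) and incoming 2-neighbors (right child). -/
noncomputable def stateA' : ℕ → BTree → Q3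
  | 0, _ => Q3.w
  | t+1, .leaf => δA' ∅ ∅
  | t+1, .one l => δA' {stateA' t l} ∅
  | t+1, .two l r => δA' {stateA' t l} {stateA' t r}

lemma δ_empty : δA' ∅ ∅ = Q3.f := by simp [δA', (Set.singleton_ne_empty Q3.w).symm]

lemma δ_pair (a b : Q3) : δA' {a} {b} =
    if a = Q3.w ∧ b = Q3.w then Q3.w
    else if a = Q3.f ∧ b = Q3.f then Q3.f else Q3.y := by
  cases a <;> cases b <;> simp [δA']

lemma δ_one (a : Q3) : δA' {a} ∅ = if a = Q3.f then Q3.f else Q3.y := by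
  cases a <;> simp [δA', (Set.singleton_ne_empty Q3.w).symm]

lemma bal_run {T : BTree} (h : T.balanced) (t : ℕ) :
    stateA' t T = if t ≤ T.height then Q3.w else Q3.f := by
  induction T generalizing t with
  | leaf =>
    cases t with
    | zero => simp [stateA']
    | succ t => simp [stateA', δ_empty, BTree.height]
  | one l ih => exact absurd h (by simp [BTree.balanced])
  | two l r ihl ihr =>
    obtain ⟨hl, hr, hh⟩ := h
    cases t with
    | zero => simp [stateA']
    | succ t =>
      rw [stateA', ihl hl, ihr hr, BTree.height, ← hh, max_self]
      by_cases ht : t ≤ l.height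
      · simp [ht, δ_pair, Nat.succ_le_succ ht]
      · simp [ht, δ_pair, fun h => ht (Nat.le_of_succ_le_succ h)]

lemma unbal_y {T : BTree} (h : ¬ T.balanced) : ∃ t, stateA' t T = Q3.y := by
  induction T with
  | leaf => simp [BTree.balanced] at h
  | one l ih =>
    refine ⟨1, ?_⟩
    rw [stateA']
    rw [show stateA' 0 l = Q3.w from rfl, δ_one]
    simp
  | two l r ihl ihr =>
    by_cases hl : l.balanced
    · by_cases hr : r.balanced
      · have hne : l.height ≠ r.height := by
          intro he; exact h ⟨hl, hr, he⟩
        rcases lt_or_gt_of_ne hne with hlt | hlt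
        · refine ⟨l.height + 2, ?_⟩
          rw [stateA', bal_run hl, bal_run hr, δ_pair]
          simp [Nat.succ_le_of_lt hlt]
        · refine ⟨r.height + 2, ?_⟩
          rw [stateA', bal_run hl, bal_run hr, δ_pair]
          simp [Nat.succ_le_of_lt hlt]
      · obtain ⟨t, ht⟩ := ihr hr
        refine ⟨t + 1, ?_⟩
        rw [stateA', ht, δ_pair]
        simp
    · obtain ⟨t, ht⟩ := ihl hl
      refine ⟨t + 1, ?_⟩
      rw [stateA', ht, δ_pair]
      simp

/-- the forgetful distributed automaton A' with states `{w,f,y}`,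
initial state `w`, accepting set `{y}` and transition `δA'` accepts at the root
of an ordered binary ditree iff the tree is not perfectly balanced. -/
theorem forgetful_detects_unbalanced :
    ∀ T : BTree, (∃ t, stateA' t T = Q3.y) ↔ ¬ T.balanced := by
  intro T
  constructor
  · rintro ⟨t, ht⟩ hb
    rw [bal_run hb] at ht
    by_cases h : t ≤ T.height <;> simp [h] at ht
  · exact unbal_y
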